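/- arXiv:2210.04348 — 4 statements merged into one kernel-verified Lean document; each statement's English description precedes it below -/
import Mathlib

section
/- Let $D$ be a Hausdorff topological space, $f, g, h : D \to \mathbb{R} \cup \{-\infty\}$ upper semicontinuous functions, and $\emptyset \neq A \subseteq B \subseteq D$ with $A$ compact. If $f(t) < g(t)$ for all $t \in A$, and $h$ is not identically $-\infty$ on $A$, then $\max_A (f+h) < \sup_B (g+h)$. -/
open Set Filter

noncomputable section

/-- A kernel function: finite and concave on `(-1,0)` and `(0,1)`, with equal one-sided
limits at `0`, extended to `[-1,1]` (values in `ℝ ∪ {-∞}`, i.e. never `⊤`) by limits. -/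
def IsKernelFunction (K : ℝ → EReal) : Prop :=
  (∀ t ∈ Set.Icc (-1:ℝ) 1, K t ≠ ⊤) ∧
  (∀ t ∈ Set.Ioo (-1:ℝ) 0, K t ≠ ⊥) ∧
  (∀ t ∈ Set.Ioo (0:ℝ) 1, K t ≠ ⊥) ∧
  ConcaveOn ℝ (Set.Ioo (-1:ℝ) 0) (fun t => (K t).toReal) ∧
  ConcaveOn ℝ (Set.Ioo (0:ℝ) 1) (fun t => (K t).toReal) ∧
  Filter.Tendsto K (nhdsWithin 0 (Set.Iio 0)) (nhds (K 0)) ∧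
  Filter.Tendsto K (nhdsWithin 0 (Set.Ioi 0)) (nhds (K 0)) ∧
  Filter.Tendsto K (nhdsWithin (-1) (Set.Ioi (-1:ℝ))) (nhds (K (-1))) ∧
  Filter.Tendsto K (nhdsWithin 1 (Set.Iio (1:ℝ))) (nhds (K 1))

/-- Monotone kernel: non-increasing on `(-1,0)`, non-decreasing on `(0,1)`. -/
def IsMonotoneKernel (K : ℝ → EReal) : Prop :=
  IsKernelFunction K ∧ AntitoneOn K (Set.Ioo (-1:ℝ) 0) ∧ MonotoneOn K (Set.Ioo (0:ℝ) 1)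

/-- The closed simplex of node systems `0 ≤ y 0 ≤ ⋯ ≤ y (n-1) ≤ 1`. -/
def simplex (n : ℕ) : Set (Fin n → ℝ) :=
  {y | Monotone y ∧ ∀ i, y i ∈ Set.Icc (0:ℝ) 1}

/-- The `j`-th node of the node system `y`, with `node y 0 = 0` and `node y (n+1) = 1`. -/
def node {n : ℕ} (y : Fin n → ℝ) (j : ℕ) : ℝ :=
  if h : 1 ≤ j ∧ j ≤ n then y ⟨j - 1, by omega⟩ else if j = 0 then 0 else 1

/-- An `n`-field function: bounded above on `[0,1]`, with values in `ℝ ∪ {-∞}`, finite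
at more than `n` points of `[0,1]`, where `0` and `1` count with weight `1/2`. -/
def IsFieldFunction (n : ℕ) (J : ℝ → EReal) : Prop :=
  (∀ t ∈ Set.Icc (0:ℝ) 1, J t ≠ ⊤) ∧
  (∃ C : ℝ, ∀ t ∈ Set.Icc (0:ℝ) 1, J t ≤ (C : EReal)) ∧
  ∃ T : Finset ℝ, ↑T ⊆ Set.Icc (0:ℝ) 1 ∧ (∀ t ∈ T, J t ≠ ⊥) ∧
    (n : ℝ) < ∑ t ∈ T, (if t = 0 ∨ t = 1 then (1/2 : ℝ) else 1)

/-- The (weighted) sum of translates function `F(y,t) = J(t) + ∑ ν_j K(t - y_j)`. -/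
def Fsum {n : ℕ} (K : ℝ → EReal) (ν : Fin n → ℝ) (J : ℝ → EReal)
    (y : Fin n → ℝ) (t : ℝ) : EReal :=
  J t + ∑ j, (ν j : EReal) * K (t - y j)

/-- The `j`-th interval maximum `m_j(y) = sup_{t ∈ [y_j, y_{j+1}]} F(y,t)`. -/
def mj {n : ℕ} (K : ℝ → EReal) (ν : Fin n → ℝ) (J : ℝ → EReal)
    (y : Fin n → ℝ) (j : ℕ) : EReal :=
  sSup (Fsum K ν J y '' Set.Icc (node y j) (node y (j + 1)))

/-- The regularity set `Y`: node systems with all interval maxima `> -∞`. -/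
def regularitySet {n : ℕ} (K : ℝ → EReal) (ν : Fin n → ℝ) (J : ℝ → EReal) :
    Set (Fin n → ℝ) :=
  {y ∈ simplex n | ∀ j ≤ n, mj K ν J y j ≠ ⊥}

/-- Upper semicontinuous regularization of a function on `[0,1]`. -/
def uscReg (φ : ℝ → EReal) (t : ℝ) : EReal :=
  ⨅ (r : ℝ) (_ : 0 < r), sSup (φ '' (Set.Ioo (t - r) (t + r) ∩ Set.Icc 0 1))

/-- Upper semicontinuous regularization computed within a subset `A` of `[0,1]`. -/
def uscRegOn (A : Set ℝ) (φ : ℝ → EReal) (t : ℝ) : EReal :=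
  ⨅ (r : ℝ) (_ : 0 < r), sSup (φ '' (Set.Ioo (t - r) (t + r) ∩ A))

theorem EReal.upperSemicontinuousOn_add {α : Type*} [TopologicalSpace α] {f g : α → EReal}
    {s : Set α} (hf : UpperSemicontinuousOn f s) (hg : UpperSemicontinuousOn g s)
    (hf_top : ∀ x ∈ s, f x ≠ ⊤) (hg_top : ∀ x ∈ s, g x ≠ ⊤) :
    UpperSemicontinuousOn (fun x => f x + g x) s :=
  hf.add' hg fun x hx => EReal.continuousAt_add (Or.inl (hf_top x hx)) (Or.inr (hg_top x hx))

theorem EReal.exists_add_lt_add_of_lt {α : Type*} {f g h : α → EReal} {s : Set α}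
    (hlt : ∀ t ∈ s, f t < g t) (h_top : ∀ t ∈ s, h t ≠ ⊤) (h_bot : ∃ t ∈ s, h t ≠ ⊥)
    {t₀ : α} (ht₀ : t₀ ∈ s) :
    ∃ t ∈ s, f t₀ + h t₀ < g t + h t := by
  by_cases h₀ : h t₀ = ⊥
  · obtain ⟨t₁, ht₁, h₁⟩ := h_bot
    refine ⟨t₁, ht₁, ?_⟩
    rw [h₀, EReal.add_bot]
    exact EReal.bot_lt_add_iff.2 ⟨bot_le.trans_lt (hlt t₁ ht₁), h₁.bot_lt⟩
  · exact ⟨t₀, ht₀, EReal.add_lt_add_of_lt_of_le (hlt t₀ ht₀) le_rfl h₀ (h_top t₀ ht₀)⟩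

theorem trivial_lemma_general {D : Type*} [TopologicalSpace D]
    (f g h : D → EReal)
    (hh : ∀ t, h t ≠ ⊤)
    (hfu : UpperSemicontinuous f)
    (hhu : UpperSemicontinuous h)
    (A B : Set D) (hAne : A.Nonempty) (hAB : A ⊆ B) (hA : IsCompact A)
    (hlt : ∀ t ∈ A, f t < g t)
    (hne : ∃ t ∈ A, h t ≠ ⊥) :
    sSup ((fun t => f t + h t) '' A) < sSup ((fun t => g t + h t) '' B) := by
  have hf_top : ∀ t ∈ A, f t ≠ ⊤ := fun t ht => (hlt t ht).ne_top
  obtain ⟨t₀, ht₀, hmax⟩ :=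
    (EReal.upperSemicontinuousOn_add (hfu.upperSemicontinuousOn A)
      (hhu.upperSemicontinuousOn A) hf_top fun t _ => hh t).exists_isMaxOn hAne hA
  obtain ⟨t, ht, hlt₀⟩ := EReal.exists_add_lt_add_of_lt hlt (fun t _ => hh t) hne ht₀
  calc sSup ((fun t => f t + h t) '' A) ≤ f t₀ + h t₀ :=
        sSup_le (forall_mem_image.2 fun _ hs => isMaxOn_iff.1 hmax _ hs)
    _ < g t + h t := hlt₀
    _ ≤ sSup ((fun t => g t + h t) '' B) := le_sSup (mem_image_of_mem _ (hAB ht))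

/-- **Trivial lemma.** If `f < g` on a nonempty compact `A ⊆ B`, all functions upper
semicontinuous into `ℝ ∪ {-∞}`, and `h` is not identically `-∞` on `A`, then
`max_A (f+h) < sup_B (g+h)`. -/
theorem trivial_lemma {D : Type*} [TopologicalSpace D] [T2Space D]
    (f g h : D → EReal)
    (hf : ∀ t, f t ≠ ⊤) (hg : ∀ t, g t ≠ ⊤) (hh : ∀ t, h t ≠ ⊤)
    (hfu : UpperSemicontinuous f) (hgu : UpperSemicontinuous g)
    (hhu : UpperSemicontinuous h)
    (A B : Set D) (hAne : A.Nonempty) (hAB : A ⊆ B) (hA : IsCompact A)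
    (hlt : ∀ t ∈ A, f t < g t)
    (hne : ∃ t ∈ A, h t ≠ ⊥) :
    sSup ((fun t => f t + h t) '' A) < sSup ((fun t => g t + h t) '' B) :=
  trivial_lemma_general f g h hh hfu hhu A B hAne hAB hA hlt hne
end
end

section
/- Let $K : [-1,1] \to \mathbb{R}\cup\{-\infty\}$ be a kernel function (finite and concave on $(-1,0)$ and on $(0,1)$, extended by limits to $0, \pm 1$) which is monotone, i.e., non-increasing on $(-1,0)$ and non-decreasing on $(0,1)$. Let $0 < \alpha < a < b < \beta < 1$ and $p, q > 0$, and suppose $\kappa := \frac{p(a-\alpha)}{q(\beta-b)} \ge 1$. Then for every $t \in [0,\alpha]$ one has $pK(t-\alpha) + qK(t-\beta) \le pK(t-a) + qK(t-b)$. -/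
/-!
The points `t - β < t - b < t - a < t - α` lie in `(-1, 0]`, where `K` is finite (except possibly
at `0`), concave and non-increasing. Concavity bounds the slope of `K` on `[t - a, t - α]` by its
slope on `[t - β, t - b]`, which is non-positive, and `κ ≥ 1` says that the first increment
carries at least as much weight: `q (β - b) ≤ p (a - α)`. When `t = α` the slope at `0` is
obtained as a limit, by the continuity of `K` from the left at `0`.
-/

open Set Filter

noncomputable section

theorem ConcaveOn.slope_le_of_tendsto_nhdsWithin_Iio {f : ℝ → ℝ} {l r x y c : ℝ}
    (hf : ConcaveOn ℝ (Ioo l r) f) (hr : Tendsto f (nhdsWithin r (Iio r)) (nhds c))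
    (hx : l < x) (hxy : x < y) (hyr : y < r) :
    (c - f y) / (r - y) ≤ (f y - f x) / (y - x) := by
  have hslope : Tendsto (fun s => (f s - f y) / (s - y)) (nhdsWithin r (Iio r))
      (nhds ((c - f y) / (r - y))) :=
    (hr.sub tendsto_const_nhds).div
      ((tendsto_id.mono_left nhdsWithin_le_nhds).sub tendsto_const_nhds)
      (sub_ne_zero.2 hyr.ne')
  refine le_of_tendsto hslope ?_
  filter_upwards [Ioo_mem_nhdsLT hyr] with s hs
  exact hf.slope_anti_adjacent ⟨hx, hxy.trans hyr⟩ ⟨(hx.trans hxy).trans hs.1, hs.2⟩ hxy hs.1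

theorem mul_add_mul_le_of_slope_le {f : ℝ → ℝ} {x₁ x₂ x₃ x₄ p q : ℝ}
    (h12 : x₁ < x₂) (h34 : x₃ < x₄) (hp : 0 ≤ p) (hf : f x₂ ≤ f x₁)
    (hslope : (f x₄ - f x₃) / (x₄ - x₃) ≤ (f x₂ - f x₁) / (x₂ - x₁))
    (hw : q * (x₂ - x₁) ≤ p * (x₄ - x₃)) :
    p * f x₄ + q * f x₁ ≤ p * f x₃ + q * f x₂ := by
  have hslope_nonpos : (f x₂ - f x₁) / (x₂ - x₁) ≤ 0 :=
    div_nonpos_of_nonpos_of_nonneg (by linarith) (by linarith)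
  suffices p * f x₄ - p * f x₃ ≤ q * f x₂ - q * f x₁ by linarith
  calc p * f x₄ - p * f x₃ = p * (x₄ - x₃) * ((f x₄ - f x₃) / (x₄ - x₃)) := by
        field_simp [(sub_pos.2 h34).ne']
    _ ≤ p * (x₄ - x₃) * ((f x₂ - f x₁) / (x₂ - x₁)) :=
        mul_le_mul_of_nonneg_left hslope (mul_nonneg hp (by linarith))
    _ ≤ q * (x₂ - x₁) * ((f x₂ - f x₁) / (x₂ - x₁)) :=
        mul_le_mul_of_nonpos_right hw hslope_nonpos
    _ = q * f x₂ - q * f x₁ := by field_simp [(sub_pos.2 h12).ne']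

theorem EReal.coe_mul_add_coe_mul_eq_coe (p q : ℝ) {x y : EReal}
    (hx : x ≠ ⊤) (hx' : x ≠ ⊥) (hy : y ≠ ⊤) (hy' : y ≠ ⊥) :
    (p : EReal) * x + q * y = ((p * x.toReal + q * y.toReal : ℝ) : EReal) := by
  rw [EReal.coe_add, EReal.coe_mul, EReal.coe_mul, EReal.coe_toReal hx hx',
    EReal.coe_toReal hy hy']

theorem IsMonotoneKernel.mul_add_mul_le {K : ℝ → EReal} (hK : IsMonotoneKernel K)
    {x₁ x₂ x₃ x₄ p q : ℝ} (h1 : -1 < x₁) (h12 : x₁ < x₂) (h23 : x₂ < x₃) (h34 : x₃ < x₄)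
    (h4 : x₄ ≤ 0) (hp : 0 < p) (hw : q * (x₂ - x₁) ≤ p * (x₄ - x₃)) :
    (p : EReal) * K x₄ + q * K x₁ ≤ p * K x₃ + q * K x₂ := by
  obtain ⟨⟨hKtop, hKbot, -, hconc, -, hlim, -⟩, hanti, -⟩ := hK
  by_cases hbot : K x₄ = ⊥
  · rw [hbot, EReal.coe_mul_bot_of_pos hp, EReal.bot_add]
    exact bot_le
  have mem : ∀ {x}, -1 < x → x < x₄ → x ∈ Ioo (-1 : ℝ) 0 := fun h h' => ⟨h, h'.trans_le h4⟩
  have hx₁ := mem h1 (by linarith)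
  have hx₂ := mem (by linarith) (by linarith : x₂ < x₄)
  have hx₃ := mem (by linarith) h34
  have htop : ∀ {x}, x ∈ Ioo (-1 : ℝ) 0 → K x ≠ ⊤ :=
    fun hx => hKtop _ ⟨hx.1.le, by linarith [hx.2]⟩
  have htop₄ : K x₄ ≠ ⊤ := hKtop _ ⟨by linarith, by linarith⟩
  rw [EReal.coe_mul_add_coe_mul_eq_coe p q htop₄ hbot (htop hx₁) (hKbot _ hx₁),
    EReal.coe_mul_add_coe_mul_eq_coe p q (htop hx₃) (hKbot _ hx₃) (htop hx₂) (hKbot _ hx₂),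
    EReal.coe_le_coe_iff]
  refine mul_add_mul_le_of_slope_le (f := fun x => (K x).toReal) h12 h34 hp.le
    (EReal.toReal_le_toReal (hanti hx₁ hx₂ h12.le) (hKbot _ hx₂) (htop hx₁)) ?_ hw
  calc _ ≤ ((K x₃).toReal - (K x₂).toReal) / (x₃ - x₂) := by
        rcases h4.lt_or_eq with h4 | rfl
        · exact hconc.slope_anti_adjacent hx₂ ⟨by linarith, h4⟩ h23 h34
        · exact hconc.slope_le_of_tendsto_nhdsWithin_Iio
            ((EReal.tendsto_toReal htop₄ hbot).comp hlim) hx₂.1 h23 h34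
    _ ≤ _ := hconc.slope_anti_adjacent hx₁ hx₃ h12 h23

theorem interval_perturbation_a_general (K : ℝ → EReal) (hK : IsMonotoneKernel K)
    (α a b β p q : ℝ)
    (h2 : α < a) (h3 : a < b) (h4 : b < β) (h5 : β < 1)
    (hp : 0 < p) (hq : 0 < q)
    (hκ : 1 ≤ p * (a - α) / (q * (β - b))) :
    ∀ t ∈ Set.Icc (0:ℝ) α,
      (p : EReal) * K (t - α) + (q : EReal) * K (t - β)
        ≤ (p : EReal) * K (t - a) + (q : EReal) * K (t - b) := by
  rintro t ⟨ht0, htα⟩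
  have hw : q * (β - b) ≤ p * (a - α) := (one_le_div (mul_pos hq (by linarith))).mp hκ
  exact hK.mul_add_mul_le (by linarith) (by linarith) (by linarith) (by linarith) (by linarith)
    hp (by linarith)

/-- Interval perturbation lemma, part (a): for a monotone kernel and `κ ≥ 1`,
the inequality holds on `[0,α]`. -/
theorem interval_perturbation_a (K : ℝ → EReal) (hK : IsMonotoneKernel K)
    (α a b β p q : ℝ)
    (h1 : 0 < α) (h2 : α < a) (h3 : a < b) (h4 : b < β) (h5 : β < 1)
    (hp : 0 < p) (hq : 0 < q)
    (hκ : 1 ≤ p * (a - α) / (q * (β - b))) :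
    ∀ t ∈ Set.Icc (0:ℝ) α,
      (p : EReal) * K (t - α) + (q : EReal) * K (t - β)
        ≤ (p : EReal) * K (t - a) + (q : EReal) * K (t - b) :=
  interval_perturbation_a_general K hK α a b β p q h2 h3 h4 h5 hp hq hκ
end
end

section
/- Let $K$ be a kernel function (not necessarily monotone), $0 < \alpha < a < b < \beta < 1$, and $p,q > 0$ with $p(a-\alpha) = q(\beta-b)$. Then for every $t \in [0,\alpha] \cup [\beta,1]$ one has $pK(t-\alpha) + qK(t-\beta) \le pK(t-a) + qK(t-b)$. -/
open Set Filter

noncomputable section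

/-!
For `t ∉ (α, β)` the four arguments `t - β ≤ t - b ≤ t - a ≤ t - α` lie on one side of `0`,
where `K` is concave, and `p (t - α) + q (t - β) = p (t - a) + q (t - b)`. So the pair
`(t - α, t - β)` is obtained from `(t - a, t - b)` by spreading it apart with the weighted mean
fixed, which can only decrease a weighted sum of a concave function. When `t = α` or `t = β`
the outer argument is `0`: either `K 0 = -∞` and the left side is `-∞`, or `K 0` is finite and,
being the one-sided limit, keeps `K` concave on the half-closed interval.
-/

open Topology

theorem ConcaveOn.mul_add_mul_le_mul_add_mul {s : Set ℝ} {f : ℝ → ℝ} (hf : ConcaveOn ℝ s f)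
    {x₂ x₂' x₁' x₁ p q : ℝ} (hx₂ : x₂ ∈ s) (hx₁ : x₁ ∈ s)
    (h₂ : x₂ ≤ x₂') (h' : x₂' ≤ x₁') (h₁ : x₁' ≤ x₁) (hp : 0 ≤ p) (hq : 0 ≤ q)
    (hmean : p * x₁ + q * x₂ = p * x₁' + q * x₂') :
    p * f x₁ + q * f x₂ ≤ p * f x₁' + q * f x₂' := by
  rcases (h₂.trans (h'.trans h₁)).eq_or_lt with hx | hx
  · obtain rfl : x₂' = x₂ := by linarith
    obtain rfl : x₁' = x₂' := by linarith
    rw [hx]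
  have chord : ∀ y ∈ Icc x₂ x₁, (x₁ - y) * f x₂ + (y - x₂) * f x₁ ≤ (x₁ - x₂) * f y := by
    rintro y ⟨hy₂, hy₁⟩
    rcases hy₂.eq_or_lt with rfl | hy₂
    · linarith
    rcases hy₁.eq_or_lt with rfl | hy₁
    · linarith
    have := hf.neg.secant_mono_aux1 hx₂ hx₁ hy₂ hy₁
    simp only [Pi.neg_apply] at this
    linarith
  have h₁' := mul_le_mul_of_nonneg_left (chord x₁' ⟨h₂.trans h', h₁⟩) hp
  have h₂' := mul_le_mul_of_nonneg_left (chord x₂' ⟨h₂, h'.trans h₁⟩) hq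
  refine le_of_mul_le_mul_left ?_ (sub_pos.2 hx)
  linear_combination h₁' + h₂' + (f x₁ - f x₂) * hmean

theorem ConcaveOn.concaveOn_Ioc_of_continuousWithinAt {f : ℝ → ℝ} {a b : ℝ}
    (hf : ConcaveOn ℝ (Ioo a b) f) (hb : ContinuousWithinAt f (Ioo a b) b) :
    ConcaveOn ℝ (Ioc a b) f := by
  refine concaveOn_of_slope_anti_adjacent (convex_Ioc a b) fun {x y z} hx hz hxy hyz => ?_
  have hx' : x ∈ Ioo a b := ⟨hx.1, hxy.trans (hyz.trans_le hz.2)⟩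
  rcases hz.2.lt_or_eq with hzb | rfl
  · exact hf.slope_anti_adjacent hx' ⟨hx.1.trans (hxy.trans hyz), hzb⟩ hxy hyz
  have hlim : Tendsto (fun w => (f w - f y) / (w - y)) (𝓝[<] z) (𝓝 ((f z - f y) / (z - y))) := by
    rw [← nhdsWithin_Ioo_eq_nhdsLT hz.1]
    exact (hb.sub tendsto_const_nhds).div (tendsto_nhdsWithin_of_tendsto_nhds
      ((continuous_id.sub continuous_const).tendsto z)) (sub_pos.2 hyz).ne'
  refine le_of_tendsto hlim ?_
  filter_upwards [Ioo_mem_nhdsLT hyz] with w hw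
  exact hf.slope_anti_adjacent hx' ⟨hx.1.trans (hxy.trans hw.1), hw.2⟩ hxy hw.1

theorem ConcaveOn.concaveOn_Ico_of_continuousWithinAt {f : ℝ → ℝ} {a b : ℝ}
    (hf : ConcaveOn ℝ (Ioo a b) f) (ha : ContinuousWithinAt f (Ioo a b) a) :
    ConcaveOn ℝ (Ico a b) f := by
  refine concaveOn_of_slope_anti_adjacent (convex_Ico a b) fun {x y z} hx hz hxy hyz => ?_
  have hz' : z ∈ Ioo a b := ⟨(hx.1.trans_lt hxy).trans hyz, hz.2⟩
  rcases hx.1.lt_or_eq with hax | rfl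
  · exact hf.slope_anti_adjacent ⟨hax, (hxy.trans hyz).trans hz.2⟩ hz' hxy hyz
  have hlim : Tendsto (fun w => (f y - f w) / (y - w)) (𝓝[>] a) (𝓝 ((f y - f a) / (y - a))) := by
    rw [← nhdsWithin_Ioo_eq_nhdsGT hx.2]
    exact (tendsto_const_nhds.sub ha).div (tendsto_nhdsWithin_of_tendsto_nhds
      ((continuous_const.sub continuous_id).tendsto a)) (sub_pos.2 hxy).ne'
  refine ge_of_tendsto hlim ?_
  filter_upwards [Ioo_mem_nhdsGT hxy] with w hw
  exact hf.slope_anti_adjacent ⟨hw.1, (hw.2.trans hyz).trans hz.2⟩ hz' hw.2 hyz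

namespace IsKernelFunction

variable {K : ℝ → EReal} {x₂ x₂' x₁' x₁ p q : ℝ}

theorem mul_add_mul_le_of_nonpos (hK : IsKernelFunction K) (hx₂ : -1 < x₂) (h₂ : x₂ ≤ x₂')
    (h' : x₂' ≤ x₁') (hx₁' : x₁' < 0) (h₁ : x₁' ≤ x₁) (hx₁ : x₁ ≤ 0) (hp : 0 < p) (hq : 0 ≤ q)
    (hmean : p * x₁ + q * x₂ = p * x₁' + q * x₂') :
    (p : EReal) * K x₁ + q * K x₂ ≤ p * K x₁' + q * K x₂' := by
  obtain ⟨hTop, hBot, -, hConc, -, hLim, -⟩ := hK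
  by_cases hbot : K x₁ = ⊥
  · rw [hbot, EReal.coe_mul_bot_of_pos hp, EReal.bot_add]
    exact bot_le
  have hconc : ConcaveOn ℝ (Ioc (-1) x₁) (fun x => (K x).toReal) := by
    rcases hx₁.lt_or_eq with hneg | rfl
    · exact hConc.subset (Ioc_subset_Ioo_right hneg) (convex_Ioc _ _)
    · exact hConc.concaveOn_Ioc_of_continuousWithinAt <|
        (EReal.tendsto_toReal (hTop 0 ⟨by norm_num, by norm_num⟩) hbot).comp
          (hLim.mono_left (nhdsWithin_mono _ Ioo_subset_Iio_self))
  have hreal := hconc.mul_add_mul_le_mul_add_mul ⟨hx₂, by linarith⟩ ⟨by linarith, le_rfl⟩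
    h₂ h' h₁ hp.le hq hmean
  have hcoe : ∀ x ∈ Ioo (-1 : ℝ) 0, ((K x).toReal : EReal) = K x := fun x hx =>
    EReal.coe_toReal (hTop x ⟨hx.1.le, by linarith [hx.2]⟩) (hBot x hx)
  rw [← hcoe x₂ ⟨hx₂, by linarith⟩, ← hcoe x₂' ⟨by linarith, by linarith⟩,
    ← hcoe x₁' ⟨by linarith, hx₁'⟩, ← EReal.coe_toReal (hTop x₁ ⟨by linarith, by linarith⟩) hbot]
  exact_mod_cast hreal

theorem mul_add_mul_le_of_nonneg (hK : IsKernelFunction K) (hx₂ : 0 ≤ x₂) (h₂ : x₂ ≤ x₂')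
    (hx₂' : 0 < x₂') (h' : x₂' ≤ x₁') (h₁ : x₁' ≤ x₁) (hx₁ : x₁ < 1) (hp : 0 ≤ p) (hq : 0 < q)
    (hmean : p * x₁ + q * x₂ = p * x₁' + q * x₂') :
    (p : EReal) * K x₁ + q * K x₂ ≤ p * K x₁' + q * K x₂' := by
  obtain ⟨hTop, -, hBot, -, hConc, -, hLim, -⟩ := hK
  by_cases hbot : K x₂ = ⊥
  · rw [hbot, EReal.coe_mul_bot_of_pos hq, EReal.add_bot]
    exact bot_le
  have hconc : ConcaveOn ℝ (Ico x₂ 1) (fun x => (K x).toReal) := by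
    rcases hx₂.lt_or_eq with hpos | rfl
    · exact hConc.subset (Ico_subset_Ioo_left hpos) (convex_Ico _ _)
    · exact hConc.concaveOn_Ico_of_continuousWithinAt <|
        (EReal.tendsto_toReal (hTop 0 ⟨by norm_num, by norm_num⟩) hbot).comp
          (hLim.mono_left (nhdsWithin_mono _ Ioo_subset_Ioi_self))
  have hreal := hconc.mul_add_mul_le_mul_add_mul ⟨le_rfl, by linarith⟩ ⟨by linarith, hx₁⟩
    h₂ h' h₁ hp hq.le hmean
  have hcoe : ∀ x ∈ Ioo (0 : ℝ) 1, ((K x).toReal : EReal) = K x := fun x hx =>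
    EReal.coe_toReal (hTop x ⟨by linarith [hx.1], hx.2.le⟩) (hBot x hx)
  rw [← hcoe x₁ ⟨by linarith, hx₁⟩, ← hcoe x₁' ⟨by linarith, by linarith⟩,
    ← hcoe x₂' ⟨hx₂', by linarith⟩, ← EReal.coe_toReal (hTop x₂ ⟨by linarith, by linarith⟩) hbot]
  exact_mod_cast hreal

end IsKernelFunction

/-- Interval perturbation lemma, part (c): for any kernel (not necessarily monotone)
and `κ = 1`, the inequality holds on `[0,α] ∪ [β,1]`. -/
theorem interval_perturbation_c (K : ℝ → EReal) (hK : IsKernelFunction K)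
    (α a b β p q : ℝ)
    (h1 : 0 < α) (h2 : α < a) (h3 : a < b) (h4 : b < β) (h5 : β < 1)
    (hp : 0 < p) (hq : 0 < q)
    (hκ : p * (a - α) = q * (β - b)) :
    ∀ t ∈ Set.Icc (0:ℝ) α ∪ Set.Icc β (1:ℝ),
      (p : EReal) * K (t - α) + (q : EReal) * K (t - β)
        ≤ (p : EReal) * K (t - a) + (q : EReal) * K (t - b) := by
  have hmean (t : ℝ) : p * (t - α) + q * (t - β) = p * (t - a) + q * (t - b) := by
    linear_combination hκ
  rintro t (⟨ht0, htα⟩ | ⟨htβ, ht1⟩)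
  · exact hK.mul_add_mul_le_of_nonpos (by linarith) (by linarith) (by linarith) (by linarith)
      (by linarith) (by linarith) hp hq.le (hmean t)
  · exact hK.mul_add_mul_le_of_nonneg (by linarith) (by linarith) (by linarith) (by linarith)
      (by linarith) (by linarith) hp.le hq (hmean t)
end
end

section
/- Let $K$ be a kernel function, $n \in \mathbb{N}$, $\nu_1,\dots,\nu_n > 0$, and $J$ an $n$-field function. Define $F(\mathbf{y},t) = J(t) + \sum_{j=1}^n \nu_j K(t - y_j)$ and $\overline{m}(\mathbf{y}) = \sup_{t\in[0,1]} F(\mathbf{y},t)$ for $\mathbf{y} \in \overline{S}$. Then $\overline{m} : \overline{S} \to \mathbb{R}$ is real-valued and continuous. -/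
open Set Filter

noncomputable section

/-! Writing `F(y,t) = J(t) + G(y,t)` with `G(y,t) = ∑ ν_j K(t - y_j)` continuous on `S̄ × [0,1]`
(into `EReal`, never `⊤`), `m̄` is lower semicontinuous as a supremum of continuous functions of
`y`, and upper semicontinuous by a compactness argument in `t` that needs only the upper bound on
`J`. The same bounds give `m̄ < ⊤`. For `m̄ > ⊥`, each node `y_j` makes `K(t - y_j) = ⊥` only for
`t - y_j ∈ {-1, 0, 1}`, i.e. on points of `[0,1]` of total weight at most `1`; since `J` is finite
on points of total weight more than `n`, some such point has `F(y,t) > ⊥`. -/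

open Function Topology

theorem EReal.finset_sum_ne_top {ι : Type*} {s : Finset ι} {f : ι → EReal}
    (h : ∀ i ∈ s, f i ≠ ⊤) : ∑ i ∈ s, f i ≠ ⊤ :=
  Finset.sum_induction f (· ≠ ⊤) (fun _ _ ha hb => (EReal.add_lt_top ha hb).ne)
    EReal.zero_ne_top h

theorem EReal.finset_sum_ne_bot {ι : Type*} {s : Finset ι} {f : ι → EReal}
    (h : ∀ i ∈ s, f i ≠ ⊥) : ∑ i ∈ s, f i ≠ ⊥ :=
  Finset.sum_induction f (· ≠ ⊥) (fun _ _ ha hb => by simp [EReal.add_eq_bot_iff, ha, hb])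
    EReal.zero_ne_bot h

theorem EReal.continuousOn_finset_sum {ι α : Type*} [TopologicalSpace α] {S : Set α}
    (s : Finset ι) {f : ι → α → EReal} (hf : ∀ i ∈ s, ContinuousOn (f i) S)
    (htop : ∀ i ∈ s, ∀ x ∈ S, f i x ≠ ⊤) :
    ContinuousOn (fun x => ∑ i ∈ s, f i x) S := by
  classical
  induction s using Finset.induction_on with
  | empty => simpa using continuousOn_const
  | insert i s hi ih =>
    simp only [Finset.sum_insert hi]
    intro x hx
    have hsum := ih (fun j hj => hf j (Finset.mem_insert_of_mem hj))
      (fun j hj => htop j (Finset.mem_insert_of_mem hj))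
    have hpair : ContinuousWithinAt (fun y => (f i y, ∑ j ∈ s, f j y)) S x :=
      (hf i (Finset.mem_insert_self i s) x hx).prodMk (hsum x hx)
    exact ContinuousAt.comp_continuousWithinAt (f := fun y => (f i y, ∑ j ∈ s, f j y))
      (EReal.continuousAt_add (Or.inl (htop i (Finset.mem_insert_self i s) x hx))
        (Or.inr (EReal.finset_sum_ne_top fun j hj => htop j (Finset.mem_insert_of_mem hj) x hx)))
      hpair

theorem EReal.continuous_coe_mul {c : ℝ} (hc : c ≠ 0) :
    Continuous fun x : EReal => (c : EReal) * x :=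
  continuous_iff_continuousAt.2 fun x =>
    (EReal.continuousAt_mul (p := ((c : EReal), x)) (Or.inl (EReal.coe_ne_zero.2 hc))
      (Or.inl (EReal.coe_ne_zero.2 hc))
      (Or.inl (EReal.coe_ne_bot c)) (Or.inl (EReal.coe_ne_top c))).comp
      (continuous_const.prodMk continuous_id).continuousAt

theorem EReal.coe_mul_ne_top {c : ℝ} (hc : 0 < c) {x : EReal} (hx : x ≠ ⊤) :
    (c : EReal) * x ≠ ⊤ := by
  simp [EReal.mul_ne_top, hc.le, hx]

theorem EReal.coe_mul_ne_bot {c : ℝ} (hc : 0 < c) {x : EReal} (hx : x ≠ ⊥) :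
    (c : EReal) * x ≠ ⊥ := by
  simp [EReal.mul_ne_bot, hc.le, hx]

theorem continuousOn_of_concaveOn_toReal {f : ℝ → EReal} {U : Set ℝ} (hU : IsOpen U)
    (hf : ConcaveOn ℝ U fun t => (f t).toReal) (htop : ∀ t ∈ U, f t ≠ ⊤)
    (hbot : ∀ t ∈ U, f t ≠ ⊥) : ContinuousOn f U :=
  (continuous_coe_real_ereal.comp_continuousOn (hf.continuousOn hU)).congr fun t ht =>
    (EReal.coe_toReal (htop t ht) (hbot t ht)).symm

section SupOfSum

variable {X T : Type*} [TopologicalSpace X] {S : Set X} {A : Set T}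
  {x₀ : X} {J : T → EReal} {G : X → T → EReal}

theorem lowerSemicontinuousWithinAt_sSup_image_add
    (hG : ∀ t ∈ A, ContinuousWithinAt (fun x => G x t) S x₀) :
    LowerSemicontinuousWithinAt (fun x => sSup ((fun t => J t + G x t) '' A)) S x₀ := by
  simp only [sSup_image]
  refine lowerSemicontinuousWithinAt_biSup fun t ht => ?_
  exact (EReal.lowerSemicontinuous_add.lowerSemicontinuousWithinAt univ _).comp
    (g := fun x => (J t, G x t)) (continuousWithinAt_const.prodMk (hG t ht)) (mapsTo_univ _ _)

/-- The bound `J ≤ C` makes up for the lack of any regularity of `J`: near a point where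
`G x₀ t = ⊥` the sum is small whatever `J` is, and near a point where `G x₀ t` is finite,
`G x s ≤ G x₀ s + ε`. -/
theorem eventually_add_le_of_continuousWithinAt [TopologicalSpace T] {C r' r : ℝ}
    (hJ : ∀ t ∈ A, J t ≤ C) (hx₀ : x₀ ∈ S) {t : T}
    (hG : ContinuousWithinAt (uncurry G) (S ×ˢ A) (x₀, t)) (hGtop : G x₀ t ≠ ⊤)
    (hr' : ∀ s ∈ A, J s + G x₀ s ≤ r') (hr'r : r' < r) :
    ∀ᶠ p in 𝓝[S ×ˢ A] (x₀, t), J p.2 + G p.1 p.2 ≤ r := by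
  have hGt : Tendsto (uncurry G) (𝓝[S ×ˢ A] (x₀, t)) (𝓝 (G x₀ t)) := hG
  have hG₀ : Tendsto (G x₀) (𝓝[A] t) (𝓝 (G x₀ t)) :=
    hG.comp (f := fun s => (x₀, s)) (continuousWithinAt_const.prodMk continuousWithinAt_id)
      fun s hs => ⟨hx₀, hs⟩
  induction hg : G x₀ t using EReal.rec with
  | bot =>
    rw [hg] at hGt
    filter_upwards [self_mem_nhdsWithin, hGt.eventually_lt_const (EReal.bot_lt_coe (r - C))]
      with p hp hGp
    calc J p.2 + G p.1 p.2 ≤ (C : EReal) + ((r - C : ℝ) : EReal) := add_le_add (hJ _ hp.2) hGp.le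
      _ = r := by rw [← EReal.coe_add, add_sub_cancel]
  | top => exact absurd hg hGtop
  | coe g =>
    set ε := r - r'
    have hball : Ioo ((g - ε / 2 : ℝ) : EReal) ((g + ε / 2 : ℝ) : EReal) ∈ 𝓝 (g : EReal) :=
      Ioo_mem_nhds (EReal.coe_lt_coe_iff.2 (by linarith [sub_pos.2 hr'r]))
        (EReal.coe_lt_coe_iff.2 (by linarith [sub_pos.2 hr'r]))
    have hsnd : Tendsto Prod.snd (𝓝[S ×ˢ A] (x₀, t)) (𝓝[A] t) :=
      continuous_snd.continuousWithinAt.tendsto_nhdsWithin fun p hp => hp.2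
    rw [hg] at hGt hG₀
    filter_upwards [self_mem_nhdsWithin, hGt hball, hsnd (hG₀ hball)] with p hp hGp hG₀p
    have hGp_le : G p.1 p.2 ≤ G x₀ p.2 + (ε : EReal) :=
      calc G p.1 p.2 ≤ ((g + ε / 2 : ℝ) : EReal) := hGp.2.le
        _ = ((g - ε / 2 : ℝ) : EReal) + (ε : EReal) := by rw [← EReal.coe_add]; ring_nf
        _ ≤ G x₀ p.2 + (ε : EReal) := add_le_add_left hG₀p.1.le _
    calc J p.2 + G p.1 p.2 ≤ J p.2 + (G x₀ p.2 + (ε : EReal)) := add_le_add_right hGp_le _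
      _ = (J p.2 + G x₀ p.2) + (ε : EReal) := (add_assoc _ _ _).symm
      _ ≤ (r' : EReal) + (ε : EReal) := add_le_add_left (hr' p.2 hp.2) _
      _ = r := by rw [← EReal.coe_add, add_sub_cancel]

theorem upperSemicontinuousWithinAt_sSup_image_add [TopologicalSpace T] (hA : IsCompact A)
    {C : ℝ} (hJ : ∀ t ∈ A, J t ≤ C) (hx₀ : x₀ ∈ S)
    (hG : ∀ t ∈ A, ContinuousWithinAt (uncurry G) (S ×ˢ A) (x₀, t))
    (hGtop : ∀ t ∈ A, G x₀ t ≠ ⊤) :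
    UpperSemicontinuousWithinAt (fun x => sSup ((fun t => J t + G x t) '' A)) S x₀ := by
  intro c hc
  obtain ⟨r, hmr, hrc⟩ := EReal.lt_iff_exists_real_btwn.1 hc
  obtain ⟨r', hmr', hr'r⟩ := EReal.lt_iff_exists_real_btwn.1 hmr
  have hr' : ∀ s ∈ A, J s + G x₀ s ≤ r' := fun s hs =>
    (le_sSup (mem_image_of_mem (fun s => J s + G x₀ s) hs)).trans hmr'.le
  have hunif : ∀ᶠ x in 𝓝 x₀, ∀ t ∈ A, (x, t) ∈ S ×ˢ A → J t + G x t ≤ r :=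
    hA.eventually_forall_of_forall_eventually fun t ht => eventually_nhdsWithin_iff.1 <|
      eventually_add_le_of_continuousWithinAt hJ hx₀ (hG t ht) (hGtop t ht) hr'
        (EReal.coe_lt_coe_iff.1 hr'r)
  filter_upwards [nhdsWithin_le_nhds hunif, self_mem_nhdsWithin] with x hx hxS
  refine lt_of_le_of_lt (sSup_le ?_) hrc
  rintro _ ⟨t, ht, rfl⟩
  exact hx t ht ⟨hxS, ht⟩

theorem continuousOn_sSup_image_add [TopologicalSpace T] (hA : IsCompact A) {C : ℝ}
    (hJ : ∀ t ∈ A, J t ≤ C) (hG : ContinuousOn (uncurry G) (S ×ˢ A))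
    (hGtop : ∀ x ∈ S, ∀ t ∈ A, G x t ≠ ⊤) :
    ContinuousOn (fun x => sSup ((fun t => J t + G x t) '' A)) S := fun x hx =>
  continuousWithinAt_iff_lower_upperSemicontinuousWithinAt.2
    ⟨lowerSemicontinuousWithinAt_sSup_image_add fun t ht =>
      (hG (x, t) ⟨hx, ht⟩).comp (f := fun x' => (x', t))
        (continuousWithinAt_id.prodMk continuousWithinAt_const) fun _ hx' => ⟨hx', ht⟩,
     upperSemicontinuousWithinAt_sSup_image_add hA hJ hx (fun _ ht => hG _ ⟨hx, ht⟩)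
       (hGtop x hx)⟩

theorem sSup_image_add_ne_top [TopologicalSpace T] (hA : IsCompact A) {C : ℝ}
    (hJ : ∀ t ∈ A, J t ≤ C) {g : T → EReal} (hg : ContinuousOn g A)
    (hgtop : ∀ t ∈ A, g t ≠ ⊤) : sSup ((fun t => J t + g t) '' A) ≠ ⊤ := by
  rcases A.eq_empty_or_nonempty with rfl | hne
  · simp
  obtain ⟨t₁, ht₁, hmax⟩ := hA.exists_isMaxOn hne hg
  refine ne_top_of_le_ne_top (EReal.add_lt_top (EReal.coe_ne_top C) (hgtop t₁ ht₁)).ne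
    (sSup_le ?_)
  rintro _ ⟨t, ht, rfl⟩
  exact add_le_add (hJ t ht) (hmax ht)

end SupOfSum

theorem sub_mem_Icc_neg_one_one {a b : ℝ} (ha : a ∈ Icc (0 : ℝ) 1) (hb : b ∈ Icc (0 : ℝ) 1) :
    a - b ∈ Icc (-1 : ℝ) 1 :=
  ⟨by linarith [ha.1, hb.2], by linarith [ha.2, hb.1]⟩

namespace IsKernelFunction

variable {K : ℝ → EReal}

protected theorem continuousOn (hK : IsKernelFunction K) : ContinuousOn K (Icc (-1) 1) := by
  obtain ⟨htop, hbot₁, hbot₂, hconc₁, hconc₂, hleft₀, hright₀, hright₁, hleft₁⟩ := hK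
  have h₁ : ContinuousOn K (Ioo (-1) 0) := continuousOn_of_concaveOn_toReal isOpen_Ioo hconc₁
    (fun t ht => htop t ⟨ht.1.le, by linarith [ht.2]⟩) hbot₁
  have h₂ : ContinuousOn K (Ioo 0 1) := continuousOn_of_concaveOn_toReal isOpen_Ioo hconc₂
    (fun t ht => htop t ⟨by linarith [ht.1], ht.2.le⟩) hbot₂
  intro x hx
  rcases hx.1.eq_or_lt with rfl | hx₁
  · exact (continuousWithinAt_Ioi_iff_Ici.1 hright₁).mono fun s hs => hs.1
  rcases hx.2.eq_or_lt with rfl | hx₂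
  · exact (continuousWithinAt_Iio_iff_Iic.1 hleft₁).mono fun s hs => hs.2
  refine ContinuousAt.continuousWithinAt ?_
  rcases lt_trichotomy x 0 with hx₀ | rfl | hx₀
  · exact h₁.continuousAt (Ioo_mem_nhds hx₁ hx₀)
  · exact continuousAt_iff_continuous_left'_right'.2 ⟨hleft₀, hright₀⟩
  · exact h₂.continuousAt (Ioo_mem_nhds hx₀ hx₂)

theorem mem_of_eq_bot (hK : IsKernelFunction K) {s : ℝ} (hs : s ∈ Icc (-1 : ℝ) 1)
    (h : K s = ⊥) : s ∈ ({-1, 0, 1} : Set ℝ) := by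
  rcases hs.1.eq_or_lt with rfl | h₁
  · simp
  rcases hs.2.eq_or_lt with rfl | h₂
  · simp
  rcases lt_trichotomy s 0 with h₀ | rfl | h₀
  · exact absurd h (hK.2.1 s ⟨h₁, h₀⟩)
  · simp
  · exact absurd h (hK.2.2.1 s ⟨h₀, h₂⟩)

end IsKernelFunction

/-- The weight with which a point of `[0,1]` counts in `IsFieldFunction`. -/
def endpointWeight (t : ℝ) : ℝ := if t = 0 ∨ t = 1 then 1 / 2 else 1

theorem endpointWeight_nonneg (t : ℝ) : 0 ≤ endpointWeight t := by
  unfold endpointWeight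
  split_ifs <;> norm_num

/-- The points of `[0,1]` within distance `0` or `1` of `u ∈ [0,1]` are `u` alone, or the two
endpoints of weight `1/2` each. -/
theorem sum_endpointWeight_le_one {u : ℝ} (hu : u ∈ Icc (0 : ℝ) 1) {S : Finset ℝ}
    (hS : ↑S ⊆ Icc (0 : ℝ) 1) (hSu : ∀ t ∈ S, t - u ∈ ({-1, 0, 1} : Set ℝ)) :
    ∑ t ∈ S, endpointWeight t ≤ 1 := by
  by_cases hu' : u = 0 ∨ u = 1
  · have hsub : S ⊆ {0, 1} := by
      intro t ht
      have htI := hS ht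
      have htu := hSu t ht
      simp only [mem_insert_iff, mem_singleton_iff] at htu
      simp only [Finset.mem_insert, Finset.mem_singleton]
      rcases hu' with rfl | rfl <;> rcases htu with h | h | h <;>
        first | (left; linarith) | (right; linarith) | (exfalso; linarith [htI.1, htI.2])
    calc ∑ t ∈ S, endpointWeight t ≤ ∑ t ∈ ({0, 1} : Finset ℝ), endpointWeight t :=
          Finset.sum_le_sum_of_subset_of_nonneg hsub fun t _ _ => endpointWeight_nonneg t
      _ = 1 := by norm_num [endpointWeight]
  · rw [not_or] at hu'
    have hsub : S ⊆ {u} := by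
      intro t ht
      have htI := hS ht
      have htu := hSu t ht
      simp only [mem_insert_iff, mem_singleton_iff] at htu
      rw [Finset.mem_singleton]
      rcases htu with h | h | h
      · exact absurd (by linarith [htI.1, hu.2] : u = 1) hu'.2
      · linarith
      · exact absurd (by linarith [htI.2, hu.1] : u = 0) hu'.1
    calc ∑ t ∈ S, endpointWeight t ≤ ∑ t ∈ ({u} : Finset ℝ), endpointWeight t :=
          Finset.sum_le_sum_of_subset_of_nonneg hsub fun t _ _ => endpointWeight_nonneg t
      _ = 1 := by simp [endpointWeight, hu']

theorem exists_forall_sub_notMem_of_card_lt_sum {ι : Type*} [Fintype ι] {u : ι → ℝ}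
    (hu : ∀ i, u i ∈ Icc (0 : ℝ) 1) {T : Finset ℝ} (hT : ↑T ⊆ Icc (0 : ℝ) 1)
    (hcard : (Fintype.card ι : ℝ) < ∑ t ∈ T, endpointWeight t) :
    ∃ t ∈ T, ∀ i, t - u i ∉ ({-1, 0, 1} : Set ℝ) := by
  classical
  by_contra! hbad
  have hcover : ∀ t ∈ T, endpointWeight t ≤
      ∑ i, if t - u i ∈ ({-1, 0, 1} : Set ℝ) then endpointWeight t else 0 := by
    intro t ht
    obtain ⟨i, hi⟩ := hbad t ht
    calc endpointWeight t = if t - u i ∈ ({-1, 0, 1} : Set ℝ) then endpointWeight t else 0 :=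
          (if_pos hi).symm
      _ ≤ _ := Finset.single_le_sum (f := fun i =>
            if t - u i ∈ ({-1, 0, 1} : Set ℝ) then endpointWeight t else 0)
          (fun j _ => by split_ifs <;> simp [endpointWeight_nonneg]) (Finset.mem_univ i)
  have : ∑ t ∈ T, endpointWeight t ≤ Fintype.card ι :=
    calc ∑ t ∈ T, endpointWeight t
        ≤ ∑ t ∈ T, ∑ i, if t - u i ∈ ({-1, 0, 1} : Set ℝ) then endpointWeight t else 0 :=
          Finset.sum_le_sum hcover
      _ = ∑ i, ∑ t ∈ T with t - u i ∈ ({-1, 0, 1} : Set ℝ), endpointWeight t := by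
          rw [Finset.sum_comm]
          simp only [Finset.sum_filter]
      _ ≤ ∑ _i : ι, (1 : ℝ) := Finset.sum_le_sum fun i _ =>
          sum_endpointWeight_le_one (hu i)
            ((Finset.coe_subset.2 (Finset.filter_subset _ _)).trans hT)
            fun t ht => (Finset.mem_filter.1 ht).2
      _ = Fintype.card ι := by simp
  linarith

theorem fsum_ne_bot {n : ℕ} {K : ℝ → EReal} {ν : Fin n → ℝ} {J : ℝ → EReal}
    {y : Fin n → ℝ} {t : ℝ} (hν : ∀ i, 0 < ν i) (hJ : J t ≠ ⊥) (hK : ∀ j, K (t - y j) ≠ ⊥) :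
    Fsum K ν J y t ≠ ⊥ := by
  rw [Fsum, Ne, EReal.add_eq_bot_iff, not_or]
  exact ⟨hJ, EReal.finset_sum_ne_bot fun j _ => EReal.coe_mul_ne_bot (hν j) (hK j)⟩

theorem mbar_realValued_continuousOn_general (n : ℕ)
    (K : ℝ → EReal) (hK : IsKernelFunction K)
    (ν : Fin n → ℝ) (hν : ∀ i, 0 < ν i)
    (J : ℝ → EReal) (hJ : IsFieldFunction n J) :
    ContinuousOn (fun y => sSup (Fsum K ν J y '' Set.Icc (0:ℝ) 1)) (simplex n) ∧
    ∀ y ∈ simplex n,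
      sSup (Fsum K ν J y '' Set.Icc (0:ℝ) 1) ≠ ⊥ ∧
      sSup (Fsum K ν J y '' Set.Icc (0:ℝ) 1) ≠ ⊤ := by
  obtain ⟨-, ⟨C, hC⟩, T, hT, hTJ, hTw⟩ := hJ
  have hsub : ∀ p ∈ simplex n ×ˢ Icc (0 : ℝ) 1, ∀ j, p.2 - p.1 j ∈ Icc (-1 : ℝ) 1 :=
    fun p hp j => sub_mem_Icc_neg_one_one hp.2 (hp.1.2 j)
  have htop : ∀ p ∈ simplex n ×ˢ Icc (0 : ℝ) 1, ∀ j, (ν j : EReal) * K (p.2 - p.1 j) ≠ ⊤ :=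
    fun p hp j => EReal.coe_mul_ne_top (hν j) (hK.1 _ (hsub p hp j))
  have hG : ContinuousOn (uncurry fun y t => ∑ j, (ν j : EReal) * K (t - y j))
      (simplex n ×ˢ Icc 0 1) :=
    EReal.continuousOn_finset_sum _
      (fun j _ => (EReal.continuous_coe_mul (hν j).ne').comp_continuousOn
        (hK.continuousOn.comp (by fun_prop) fun p hp => hsub p hp j))
      fun j _ p hp => htop p hp j
  have hGtop : ∀ y ∈ simplex n, ∀ t ∈ Icc (0 : ℝ) 1, ∑ j, (ν j : EReal) * K (t - y j) ≠ ⊤ :=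
    fun y hy t ht => EReal.finset_sum_ne_top fun j _ => htop (y, t) ⟨hy, ht⟩ j
  refine ⟨continuousOn_sSup_image_add isCompact_Icc hC hG hGtop, fun y hy => ⟨?_, ?_⟩⟩
  · obtain ⟨t, htT, ht⟩ := exists_forall_sub_notMem_of_card_lt_sum (fun j => hy.2 j) hT
      (by rwa [Fintype.card_fin])
    have hFt : Fsum K ν J y t ≠ ⊥ := fsum_ne_bot hν (hTJ t htT) fun j hj =>
      ht j (hK.mem_of_eq_bot (hsub (y, t) ⟨hy, hT htT⟩ j) hj)
    exact ne_bot_of_le_ne_bot hFt (le_sSup (mem_image_of_mem _ (hT htT)))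
  · exact sSup_image_add_ne_top isCompact_Icc hC
      (hG.comp (continuousOn_const.prodMk continuousOn_id) fun t ht => ⟨hy, ht⟩) (hGtop y hy)

/-- The global maximum function `m̄(y) = sup_{[0,1]} F(y,·)` is real-valued and
continuous on the closed simplex. -/
theorem mbar_realValued_continuousOn (n : ℕ) (hn : 0 < n)
    (K : ℝ → EReal) (hK : IsKernelFunction K)
    (ν : Fin n → ℝ) (hν : ∀ i, 0 < ν i)
    (J : ℝ → EReal) (hJ : IsFieldFunction n J) :
    ContinuousOn (fun y => sSup (Fsum K ν J y '' Set.Icc (0:ℝ) 1)) (simplex n) ∧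
    ∀ y ∈ simplex n,
      sSup (Fsum K ν J y '' Set.Icc (0:ℝ) 1) ≠ ⊥ ∧
      sSup (Fsum K ν J y '' Set.Icc (0:ℝ) 1) ≠ ⊤ :=
  mbar_realValued_continuousOn_general n K hK ν hν J hJ
end
end
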